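/- arXiv:2205.04909 — 2 statements merged into one kernel-verified Lean document; each statement's English description precedes it below -/
import Mathlib

section
/- Let n be a positive integer and ℓ a nonzero integer. The group G(n,ℓ) = ⟨u, v | uvu⁻¹ = v⁻¹, u^(2n) v^ℓ = 1⟩ is abelian if and only if ℓ = 1 or ℓ = −1. -/
/-- Relators for the group `⟨u, v | u v u⁻¹ = v⁻¹, u^(2n) v^ℓ = 1⟩`. -/
def kleinQuotRels (n ℓ : ℤ) : Set (FreeGroup (Fin 2)) :=
  {FreeGroup.of 0 * FreeGroup.of 1 * (FreeGroup.of 0)⁻¹ * FreeGroup.of 1,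
    (FreeGroup.of 0) ^ (2 * n) * (FreeGroup.of 1) ^ ℓ}

/-- The group `⟨u, v | u v u⁻¹ = v⁻¹, u^(2n) v^ℓ = 1⟩`. -/
abbrev KleinQuot (n ℓ : ℤ) : Type := PresentedGroup (kleinQuotRels n ℓ)

def KleinQuot.u (n ℓ : ℤ) : KleinQuot n ℓ := PresentedGroup.of 0
def KleinQuot.v (n ℓ : ℤ) : KleinQuot n ℓ := PresentedGroup.of 1



namespace KleinAux

/-- sign character on `ZMod (4*m)`. -/
def eps (L m : ℕ) (i : ZMod (4 * m)) : ZMod (2 * L) :=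
  if ZMod.castHom (show (2:ℕ) ∣ 4 * m from ⟨2 * m, by ring⟩) (ZMod 2) i = 0 then 1 else -1

lemma eps_add (L m : ℕ) (i j : ZMod (4 * m)) :
    eps L m (i + j) = eps L m i * eps L m j := by
  have h : ∀ x : ZMod 2, x = 0 ∨ x = 1 := by decide
  unfold eps
  rw [map_add]
  rcases h (ZMod.castHom (show (2:ℕ) ∣ 4 * m from ⟨2 * m, by ring⟩) (ZMod 2) i) with hi | hi <;>
    rcases h (ZMod.castHom (show (2:ℕ) ∣ 4 * m from ⟨2 * m, by ring⟩) (ZMod 2) j) with hj | hj <;>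
      rw [hi, hj] <;>
      simp [show (1 + 1 : ZMod 2) = 0 from by decide, show (1 : ZMod 2) ≠ 0 from by decide] <;>
      ring

lemma eps_zero (L m : ℕ) : eps L m 0 = 1 := by
  unfold eps; rw [map_zero]; simp

lemma eps_mul_self (L m : ℕ) (i : ZMod (4 * m)) : eps L m i * eps L m i = 1 := by
  unfold eps; split <;> ring

lemma eps_neg (L m : ℕ) (i : ZMod (4 * m)) : eps L m (-i) = eps L m i := by
  have h1 : eps L m (-i) * (eps L m i * eps L m i) = eps L m i * (eps L m (-i) * eps L m i) := by
    ring
  rw [eps_mul_self, ← eps_add, neg_add_cancel, eps_zero, mul_one, mul_one] at h1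
  exact h1

lemma eps_one (L m : ℕ) : eps L m 1 = -1 := by
  unfold eps
  rw [map_one, if_neg]
  decide

lemma eps_even (L m : ℕ) (k : ℕ) : eps L m ((2 * k : ℕ) : ZMod (4 * m)) = 1 := by
  unfold eps
  rw [map_natCast, if_pos]
  rw [ZMod.natCast_eq_zero_iff]
  exact ⟨k, rfl⟩

/-- the group `(ZMod (2L) ⋊ ZMod (4m))` with the second factor acting by `eps`. -/
@[ext] structure KG (L m : ℕ) where
  a : ZMod (2 * L)
  b : ZMod (4 * m)

namespace KG

variable {L m : ℕ}

instance : One (KG L m) := ⟨⟨0, 0⟩⟩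
instance : Mul (KG L m) := ⟨fun x y => ⟨x.a + eps L m x.b * y.a, x.b + y.b⟩⟩
instance : Inv (KG L m) := ⟨fun x => ⟨-(eps L m x.b * x.a), -x.b⟩⟩

lemma mul_def (x y : KG L m) : x * y = ⟨x.a + eps L m x.b * y.a, x.b + y.b⟩ := rfl
lemma one_def : (1 : KG L m) = ⟨0, 0⟩ := rfl
lemma inv_def (x : KG L m) : x⁻¹ = ⟨-(eps L m x.b * x.a), -x.b⟩ := rfl

instance : Group (KG L m) where
  mul_assoc x y z := by
    simp only [mul_def, eps_add]
    ext <;> simp <;> ring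
  one_mul x := by simp [mul_def, one_def, eps_zero]
  mul_one x := by simp [mul_def, one_def]
  inv_mul_cancel x := by
    simp only [mul_def, inv_def, one_def, eps_neg]
    ext <;> simp [eps_mul_self] <;> linear_combination (x.a) * eps_mul_self L m x.b

def uu (L m : ℕ) : KG L m := ⟨0, 1⟩
def vv (L m : ℕ) : KG L m := ⟨1, 0⟩
def zz (L m : ℕ) : KG L m := ⟨(L : ZMod (2 * L)), ((2 * m : ℕ) : ZMod (4 * m))⟩

lemma uu_pow (k : ℕ) : (uu L m) ^ k = ⟨0, (k : ZMod (4 * m))⟩ := by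
  induction k with
  | zero => simp [one_def]
  | succ k ih =>
      rw [pow_succ, ih, mul_def]
      ext <;> simp [uu]

lemma vv_pow (k : ℕ) : (vv L m) ^ k = ⟨(k : ZMod (2 * L)), 0⟩ := by
  induction k with
  | zero => simp [one_def]
  | succ k ih =>
      rw [pow_succ, ih, mul_def]
      ext <;> simp [vv, eps_zero]

lemma vv_zpow (k : ℤ) : (vv L m) ^ k = ⟨((k : ℤ) : ZMod (2 * L)), 0⟩ := by
  cases k with
  | ofNat k => rw [Int.ofNat_eq_coe, zpow_natCast, vv_pow]; push_cast; rfl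
  | negSucc k =>
      rw [zpow_negSucc, vv_pow, inv_def]
      ext <;> simp [eps_zero] <;> push_cast <;> ring

lemma cast_L_add_L : ((L : ZMod (2 * L))) + ((L : ZMod (2 * L))) = 0 := by
  rw [← Nat.cast_add, ZMod.natCast_eq_zero_iff]
  exact ⟨1, by ring⟩

lemma cast_2m_add_2m : (((2 * m : ℕ) : ZMod (4 * m))) + (((2 * m : ℕ) : ZMod (4 * m))) = 0 := by
  rw [← Nat.cast_add, ZMod.natCast_eq_zero_iff]
  exact ⟨1, by ring⟩


lemma zz_central (g : KG L m) : g * zz L m = zz L m * g := by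
  simp only [mul_def, zz, eps_even]
  ext
  · simp only
    have hL : eps L m g.b * (L : ZMod (2 * L)) = (L : ZMod (2 * L)) := by
      have h2L := cast_L_add_L (L := L)
      unfold eps
      split
      · ring
      · linear_combination -h2L
    rw [hL, one_mul, add_comm]
  · simp [add_comm]

lemma zz_sq : zz L m * zz L m = 1 := by
  rw [mul_def, zz, one_def, eps_even]
  ext
  · show (L : ZMod (2 * L)) + 1 * (L : ZMod (2 * L)) = 0
    rw [one_mul]; exact cast_L_add_L
  · exact cast_2m_add_2m

end KG

end KleinAux
namespace KleinAux
namespace KG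
variable {L m : ℕ}

instance : (Subgroup.zpowers (zz L m)).Normal := by
  constructor
  intro x hx g
  obtain ⟨k, rfl⟩ := Subgroup.mem_zpowers_iff.mp hx
  have hc : Commute g (zz L m) := zz_central g
  have : g * (zz L m) ^ k * g⁻¹ = (zz L m) ^ k := by
    rw [(hc.zpow_right k).eq, mul_assoc, mul_inv_cancel, mul_one]
  rw [this]
  exact Subgroup.zpow_mem _ (Subgroup.mem_zpowers _) k

lemma zz_zpow (k : ℤ) : (zz L m) ^ k = 1 ∨ (zz L m) ^ k = zz L m := by
  have h2 : (zz L m) ^ (2 : ℤ) = 1 := by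
    rw [zpow_two, zz_sq]
  have hk : k = 2 * (k / 2) + k % 2 := (Int.mul_ediv_add_emod k 2).symm
  have hsplit : (zz L m) ^ k = (zz L m) ^ (k % 2) := by
    conv_lhs => rw [hk]
    rw [zpow_add, zpow_mul, h2, one_zpow, one_mul]
  have : k % 2 = 0 ∨ k % 2 = 1 := Int.emod_two_eq k
  rcases this with h | h <;> rw [hsplit, h]
  · left; exact zpow_zero _
  · right; exact zpow_one _

lemma rel1 : uu L m * vv L m * (uu L m)⁻¹ * vv L m = 1 := by
  simp only [uu, vv, mul_def, inv_def, one_def]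
  ext <;> simp [eps_one, eps_zero, eps_neg] <;> ring

lemma rel2 (hcast : ((L : ℕ) : ZMod (2 * L)) = ((2 * L - 1 : ℕ) : ZMod (2 * L)) ∨ True) : True := trivial

lemma uu_zpow_two_m : (uu L m) ^ ((2 * m : ℕ) : ℤ) = (⟨0, ((2 * m : ℕ) : ZMod (4 * m))⟩ : KG L m) := by
  rw [zpow_natCast, uu_pow]

lemma rel2' {ℓ : ℤ} (hcast : ((ℓ : ℤ) : ZMod (2 * L)) = ((L : ℕ) : ZMod (2 * L))) :
    (uu L m) ^ ((2 * m : ℕ) : ℤ) * (vv L m) ^ ℓ = zz L m := by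
  rw [uu_zpow_two_m, vv_zpow, mul_def, zz]
  ext
  · show (0 : ZMod (2 * L)) + eps L m ((2 * m : ℕ) : ZMod (4 * m)) * ((ℓ : ℤ) : ZMod (2 * L)) = _
    rw [eps_even, hcast]; ring
  · show ((2 * m : ℕ) : ZMod (4 * m)) + 0 = _
    rw [add_zero]

lemma comm_elt : (uu L m * vv L m)⁻¹ * (vv L m * uu L m) =
    (⟨(-2 : ZMod (2 * L)), 0⟩ : KG L m) := by
  simp only [uu, vv, mul_def, inv_def]
  ext <;> simp [eps_one, eps_zero, eps_neg, eps_add] <;> ring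

lemma comm_notMem (hL : 2 ≤ L) (hm : 1 ≤ m) :
    (⟨(-2 : ZMod (2 * L)), 0⟩ : KG L m) ∉ Subgroup.zpowers (zz L m) := by
  intro hmem
  obtain ⟨k, hk⟩ := Subgroup.mem_zpowers_iff.mp hmem
  rcases zz_zpow (L := L) (m := m) k with h | h <;> rw [h] at hk
  · have ha := congrArg KG.a hk.symm
    simp only [one_def] at ha
    have h2 : (2 : ZMod (2 * L)) = 0 := neg_eq_zero.mp ha
    have : ((2 : ℕ) : ZMod (2 * L)) = 0 := by push_cast; exact h2
    rw [ZMod.natCast_eq_zero_iff] at this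
    have := Nat.le_of_dvd (by norm_num) this
    omega
  · have hb := congrArg KG.b hk
    simp only [zz] at hb
    have : ((2 * m : ℕ) : ZMod (4 * m)) = 0 := hb
    rw [ZMod.natCast_eq_zero_iff] at this
    have := Nat.le_of_dvd (by omega) this
    omega

end KG
end KleinAux

namespace KleinAux

open KG in
theorem not_abelian (n ℓ : ℤ) (hn : 0 < n) (h1 : ℓ ≠ 1) (h2 : ℓ ≠ -1) (hℓ : ℓ ≠ 0) :
    ¬ (KleinQuot.u n ℓ * KleinQuot.v n ℓ = KleinQuot.v n ℓ * KleinQuot.u n ℓ) := by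
  set L : ℕ := ℓ.natAbs with hLdef
  set m : ℕ := n.toNat with hmdef
  have hL : 2 ≤ L := by omega
  have hm : 1 ≤ m := by omega
  have hcast : ((ℓ : ℤ) : ZMod (2 * L)) = ((L : ℕ) : ZMod (2 * L)) := by
    rcases Int.natAbs_eq ℓ with h | h
    · rw [h, Int.cast_natCast]
    · rw [h, Int.cast_neg, Int.cast_natCast]
      have hz : ((L : ZMod (2 * L))) + ((L : ZMod (2 * L))) = 0 := cast_L_add_L
      linear_combination -hz
  set Q := KG L m ⧸ Subgroup.zpowers (zz L m) with hQdef
  let q : KG L m →* Q := QuotientGroup.mk' _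
  let F : Fin 2 → Q := ![q (uu L m), q (vv L m)]
  have h2n : (2 * n : ℤ) = ((2 * m : ℕ) : ℤ) := by omega
  have hrel : ∀ r ∈ kleinQuotRels n ℓ, FreeGroup.lift F r = 1 := by
    intro r hr
    rcases hr with rfl | rfl
    · simp only [map_mul, map_inv, FreeGroup.lift_apply_of]
      show q (uu L m) * q (vv L m) * (q (uu L m))⁻¹ * q (vv L m) = 1
      rw [← map_inv, ← map_mul, ← map_mul, ← map_mul, rel1, map_one]
    · simp only [map_mul, map_zpow, FreeGroup.lift_apply_of]
      show q (uu L m) ^ (2 * n) * q (vv L m) ^ ℓ = 1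
      rw [← map_zpow, ← map_zpow, ← map_mul, h2n, rel2' hcast]
      exact (QuotientGroup.eq_one_iff _).mpr (Subgroup.mem_zpowers _)
  intro hcomm
  have happ := congrArg (PresentedGroup.toGroup hrel) hcomm
  rw [map_mul, map_mul] at happ
  have hu : PresentedGroup.toGroup hrel (KleinQuot.u n ℓ) = q (uu L m) :=
    PresentedGroup.toGroup.of hrel
  have hv : PresentedGroup.toGroup hrel (KleinQuot.v n ℓ) = q (vv L m) :=
    PresentedGroup.toGroup.of hrel
  rw [hu, hv] at happ
  have hq : q (uu L m * vv L m) = q (vv L m * uu L m) := by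
    rw [map_mul, map_mul]; exact happ
  have hmem : (uu L m * vv L m)⁻¹ * (vv L m * uu L m) ∈ Subgroup.zpowers (zz L m) :=
    (QuotientGroup.eq (s := Subgroup.zpowers (zz L m))).mp hq
  rw [comm_elt] at hmem
  exact comm_notMem hL hm hmem

end KleinAux


/-- For `n > 0` and `ℓ ≠ 0`, the group `⟨u, v | u v u⁻¹ = v⁻¹, u^(2n) v^ℓ = 1⟩`
is abelian if and only if `ℓ = 1` or `ℓ = -1`. -/
theorem kleinQuot_abelian_iff (n ℓ : ℤ) (hn : 0 < n) (hℓ : ℓ ≠ 0) :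
    (∀ a b : KleinQuot n ℓ, a * b = b * a) ↔ (ℓ = 1 ∨ ℓ = -1) := by
  constructor
  · intro hab
    by_contra hne
    push_neg at hne
    exact KleinAux.not_abelian n ℓ hn hne.1 hne.2 hℓ
      (hab (KleinQuot.u n ℓ) (KleinQuot.v n ℓ))
  · intro hcase a b
    have hrel2 : (KleinQuot.u n ℓ) ^ (2 * n) * (KleinQuot.v n ℓ) ^ ℓ = 1 := by
      have hmem : ((FreeGroup.of 0 : FreeGroup (Fin 2)) ^ (2 * n) * (FreeGroup.of 1) ^ ℓ)
          ∈ Subgroup.normalClosure (kleinQuotRels n ℓ) :=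
        Subgroup.subset_normalClosure (by right; rfl)
      have h1 : PresentedGroup.mk (kleinQuotRels n ℓ)
          ((FreeGroup.of 0) ^ (2 * n) * (FreeGroup.of 1) ^ ℓ) = 1 :=
        (QuotientGroup.eq_one_iff _).mpr hmem
      rw [map_mul, map_zpow, map_zpow] at h1
      exact h1
    have hv : ∃ k : ℤ, KleinQuot.v n ℓ = (KleinQuot.u n ℓ) ^ k := by
      rcases hcase with rfl | rfl
      · refine ⟨-(2 * n), ?_⟩
        rw [zpow_neg, zpow_one] at *
        exact (inv_eq_of_mul_eq_one_right hrel2).symm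
      · refine ⟨2 * n, ?_⟩
        rw [zpow_neg, zpow_one] at hrel2
        have := inv_eq_of_mul_eq_one_right hrel2
        exact (inv_injective this).symm
    obtain ⟨k, hk⟩ := hv
    have htop : ∀ x : KleinQuot n ℓ, x ∈ Subgroup.zpowers (KleinQuot.u n ℓ) := by
      intro x
      have hx : x ∈ (⊤ : Subgroup (KleinQuot n ℓ)) := trivial
      rw [← PresentedGroup.closure_range_of (kleinQuotRels n ℓ)] at hx
      refine (Subgroup.closure_le _).mpr ?_ hx
      rintro _ ⟨i, rfl⟩
      fin_cases i
      · exact Subgroup.mem_zpowers _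
      · exact Subgroup.mem_zpowers_iff.mpr ⟨k, hk.symm⟩
    obtain ⟨i, hi⟩ := Subgroup.mem_zpowers_iff.mp (htop a)
    obtain ⟨j, hj⟩ := Subgroup.mem_zpowers_iff.mp (htop b)
    rw [← hi, ← hj, ← zpow_add, ← zpow_add, add_comm]
end

section
/- Let n be a positive integer. The group ⟨u, v | uvu⁻¹ = v⁻¹, u^(2n) v = 1⟩ is cyclic of order 4n. -/
section zmodLift

variable {G : Type*} [Group G] {m : ℕ}

def zmodPowersHom (g : G) (hg : g ^ m = 1) : Multiplicative (ZMod m) →* G :=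
  AddMonoidHom.toMultiplicativeLeft <|
    ZMod.lift m ⟨(zpowersHom G g).toAdditiveRight, by
      simp only [MonoidHom.toAdditiveRight_apply_apply, zpowersHom_apply, toAdd_ofAdd,
        zpow_natCast, hg, ofMul_one]⟩

@[simp]
theorem zmodPowersHom_ofAdd_intCast (g : G) (hg : g ^ m = 1) (k : ℤ) :
    zmodPowersHom g hg (Multiplicative.ofAdd (k : ZMod m)) = g ^ k := by
  simp [zmodPowersHom, zpowersHom]

theorem zmodPowersHom_ofAdd_one (g : G) (hg : g ^ m = 1) :
    zmodPowersHom g hg (Multiplicative.ofAdd 1) = g := by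
  simpa using zmodPowersHom_ofAdd_intCast g hg 1

theorem MonoidHom.ext_multiplicativeZMod {φ ψ : Multiplicative (ZMod m) →* G}
    (h : φ (Multiplicative.ofAdd 1) = ψ (Multiplicative.ofAdd 1)) : φ = ψ := by
  refine MonoidHom.ext fun x => ?_
  obtain ⟨k, hk⟩ := ZMod.intCast_surjective x.toAdd
  have hx : x = Multiplicative.ofAdd (1 : ZMod m) ^ k := by
    rw [← ofAdd_zsmul, zsmul_one, hk, ofAdd_toAdd]
  rw [hx, map_zpow, map_zpow, h]

end zmodLift

namespace KleinQuot

variable {G : Type*} [Group G]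

theorem u_mul_v_mul_u_inv_mul_v (n ℓ : ℤ) : u n ℓ * v n ℓ * (u n ℓ)⁻¹ * v n ℓ = 1 :=
  PresentedGroup.one_of_mem (Or.inl rfl)

theorem u_zpow_mul_v_zpow (n ℓ : ℤ) : u n ℓ ^ (2 * n) * v n ℓ ^ ℓ = 1 :=
  PresentedGroup.one_of_mem (Or.inr rfl)

theorem hom_ext {n ℓ : ℤ} {φ ψ : KleinQuot n ℓ →* G}
    (hu : φ (u n ℓ) = ψ (u n ℓ)) (hv : φ (v n ℓ) = ψ (v n ℓ)) : φ = ψ :=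
  PresentedGroup.ext fun i : Fin 2 => by fin_cases i <;> assumption

theorem v_eq_u_zpow (n : ℤ) : v n 1 = u n 1 ^ (-(2 * n)) := by
  rw [zpow_neg]
  exact eq_inv_of_mul_eq_one_right (by simpa using u_zpow_mul_v_zpow n 1)

theorem v_mul_v (n : ℤ) : v n 1 * v n 1 = 1 := by
  have hcomm : Commute (u n 1) (v n 1) := by
    rw [v_eq_u_zpow]
    exact Commute.zpow_right (Commute.refl _) _
  simpa [hcomm.eq] using u_mul_v_mul_u_inv_mul_v n 1

theorem u_zpow_four_mul (n : ℤ) : u n 1 ^ (4 * n) = 1 := by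
  rw [show 4 * n = -(2 * n) * (-2) by ring, zpow_mul, ← v_eq_u_zpow, zpow_neg, zpow_two, v_mul_v,
    inv_one]

def lift (n : ℤ) (g : G) (hg : g ^ (4 * n) = 1) : KleinQuot n 1 →* G :=
  PresentedGroup.toGroup (f := ![g, g ^ (-(2 * n))]) <| by
    rintro r (rfl | rfl)
    · simp only [map_mul, map_inv, FreeGroup.lift_apply_of, Matrix.cons_val_zero,
        Matrix.cons_val_one]
      calc g * g ^ (-(2 * n)) * g⁻¹ * g ^ (-(2 * n)) = (g ^ (4 * n))⁻¹ := by group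
        _ = 1 := by rw [hg, inv_one]
    · simp only [map_mul, map_zpow, FreeGroup.lift_apply_of, Matrix.cons_val_zero,
        Matrix.cons_val_one]
      group

@[simp]
theorem lift_u (n : ℤ) (g : G) (hg : g ^ (4 * n) = 1) : lift n g hg (u n 1) = g :=
  PresentedGroup.toGroup.of _

@[simp]
theorem lift_v (n : ℤ) (g : G) (hg : g ^ (4 * n) = 1) :
    lift n g hg (v n 1) = g ^ (-(2 * n)) :=
  PresentedGroup.toGroup.of _

def mulEquivZMod (n : ℕ) : KleinQuot n 1 ≃* Multiplicative (ZMod (4 * n)) :=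
  MonoidHom.toMulEquiv
    (lift n (Multiplicative.ofAdd 1) <| by
      rw [← ofAdd_zsmul, zsmul_one]
      exact_mod_cast congrArg Multiplicative.ofAdd (ZMod.natCast_self (4 * n)))
    (zmodPowersHom (u n 1) <| by exact_mod_cast u_zpow_four_mul n)
    (hom_ext
      (by rw [MonoidHom.comp_apply, lift_u, zmodPowersHom_ofAdd_one, MonoidHom.id_apply])
      (by rw [MonoidHom.comp_apply, lift_v, map_zpow, zmodPowersHom_ofAdd_one, ← v_eq_u_zpow,
        MonoidHom.id_apply]))
    (MonoidHom.ext_multiplicativeZMod <| by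
      rw [MonoidHom.comp_apply, zmodPowersHom_ofAdd_one, lift_u, MonoidHom.id_apply])

end KleinQuot

theorem kleinQuot_cyclic_general (n : ℕ) :
    Nonempty (KleinQuot n 1 ≃* Multiplicative (ZMod (4 * n))) :=
  ⟨KleinQuot.mulEquivZMod n⟩

/-- For `n > 0`, the group `⟨u, v | u v u⁻¹ = v⁻¹, u^(2n) v = 1⟩` is cyclic
of order `4n`. -/
theorem kleinQuot_cyclic (n : ℕ) (hn : 0 < n) :
    Nonempty (KleinQuot n 1 ≃* Multiplicative (ZMod (4 * n))) :=
  kleinQuot_cyclic_general n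
end
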